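/- arXiv:1506.06011 — 5 statements merged into one kernel-verified Lean document; each statement's English description precedes it below -/
import Mathlib

section
/- Assume λB < 1, where B = T + W·(rT+(1−r)σ)/(2(1−r)). Let p₀₀ ∈ ℝ and let F₀ : [0,1] → ℝ be continuous and satisfy R(x)·F₀(x) = p₀₀·Q(x) for all x ∈ [0,1), together with the normalization condition F₀(1) + (W/(2(1−r)))·(F₀(1) − p₀₀) = 1. Then p₀₀ = (1 − λB)/(1 − λA + λW·(B−A)/(2(1−r))), where A = (1−r)(T−σ) + W·(rT+(1−r)σ)/(2(1−r)). -/
/-!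
Both `R` and `Q` vanish at `x = 1`: there `u = 1`, hence `f = 1`, and `f'(1) = W u'(1) / 2`.
Differentiating gives `R'(1) = λB - 1` and `Q'(1) = λA - 1`. By ergodicity `R'(1) ≠ 0`, so
`F₀ = p₀₀ Q / R` on `[0, 1)` and continuity of `F₀` at `1` force
`F₀(1) = p₀₀ (λA - 1) / (λB - 1)`; the normalization condition is then linear in `p₀₀`.
-/

open Filter Topology

theorem tendsto_div_of_hasDerivAt_of_eq_zero {f g : ℝ → ℝ} {f' g' a : ℝ}
    (hf : HasDerivAt f f' a) (hg : HasDerivAt g g' a) (hfa : f a = 0) (hga : g a = 0)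
    (hg' : g' ≠ 0) : Tendsto (fun x => f x / g x) (𝓝[≠] a) (𝓝 (f' / g')) := by
  refine ((hasDerivAt_iff_tendsto_slope.mp hf).div
    (hasDerivAt_iff_tendsto_slope.mp hg) hg').congr' ?_
  filter_upwards [self_mem_nhdsWithin] with x hx
  rw [Pi.div_apply, slope_def_field, slope_def_field, hfa, hga, sub_zero, sub_zero,
    div_div_div_cancel_right₀ (sub_ne_zero.mpr hx)]

theorem eq_mul_div_of_mul_eq_of_hasDerivAt {F R Q : ℝ → ℝ} {s : Set ℝ} {a c R' Q' : ℝ}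
    (hF : ContinuousWithinAt F s a) [(𝓝[s] a).NeBot] (has : a ∉ s)
    (hR : HasDerivAt R R' a) (hQ : HasDerivAt Q Q' a) (hRa : R a = 0) (hQa : Q a = 0)
    (hR' : R' ≠ 0) (heq : ∀ x ∈ s, R x * F x = c * Q x) : F a = c * (Q' / R') := by
  have hs : 𝓝[s] a ≤ 𝓝[≠] a := nhdsWithin_mono a fun x hx => ne_of_mem_of_not_mem hx has
  refine tendsto_nhds_unique hF ?_
  refine (((tendsto_div_of_hasDerivAt_of_eq_zero hQ hR hQa hRa hR').const_mul c).mono_left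
    hs).congr' ?_
  filter_upwards [(hR.eventually_ne (c := 0) hR').filter_mono hs, self_mem_nhdsWithin]
    with x hRx hx
  rw [mul_div_assoc', ← heq x hx, mul_div_cancel_left₀ _ hRx]

theorem hasDerivAt_exp_neg_mul_one_sub (k x : ℝ) :
    HasDerivAt (fun y => Real.exp (-k * (1 - y))) (k * Real.exp (-k * (1 - x))) x := by
  simpa [mul_comm] using (((hasDerivAt_id x).const_sub 1).const_mul (-k)).exp

theorem hasDerivAt_geom_sum_of_eq_one {u : ℝ → ℝ} {c a : ℝ} (n : ℕ)
    (hu : HasDerivAt u c a) (ha : u a = 1) :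
    HasDerivAt (fun x => ∑ i ∈ Finset.range (n + 1), u x ^ i) (c * (n * (n + 1) / 2)) a := by
  have hsum : ∑ i ∈ Finset.range (n + 1), (i : ℝ) = n * (n + 1) / 2 := by
    have := congrArg (Nat.cast (R := ℝ)) (Finset.sum_range_id_mul_two (n + 1))
    push_cast at this
    linarith
  have h : HasDerivAt (fun x => ∑ i ∈ Finset.range (n + 1), u x ^ i)
      (∑ i ∈ Finset.range (n + 1), (i : ℝ) * u a ^ (i - 1) * c) a :=
    HasDerivAt.fun_sum fun i _ => hu.fun_pow i
  refine h.congr_deriv ?_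
  rw [← hsum, Finset.mul_sum]
  simp only [ha, one_pow, mul_one, mul_comm]

theorem hasDerivAt_pow_div_geom_sum_of_eq_one {u : ℝ → ℝ} {c a : ℝ} (n : ℕ)
    (hu : HasDerivAt u c a) (ha : u a = 1) :
    HasDerivAt (fun x => ((n : ℝ) + 1) * u x ^ n / ∑ i ∈ Finset.range (n + 1), u x ^ i)
      (c * n / 2) a := by
  have hn : (n : ℝ) + 1 ≠ 0 := by positivity
  have hS := hasDerivAt_geom_sum_of_eq_one n hu ha
  refine (((hu.fun_pow n).const_mul _).fun_div hS (by simp [ha, hn])).congr_deriv ?_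
  simp only [ha, one_pow, mul_one, Finset.sum_const, Finset.card_range, nsmul_eq_mul]
  push_cast
  field_simp
  ring

theorem hasDerivAt_one_sub_mul_exp_div_mul_exp {r : ℝ} (hr : r ≠ 1) (a b : ℝ) :
    HasDerivAt (fun x => (1 - r * Real.exp (-a * (1 - x))) / ((1 - r) * Real.exp (-b * (1 - x))))
      (-(r * a + (1 - r) * b) / (1 - r)) 1 := by
  have hr' : 1 - r ≠ 0 := sub_ne_zero.mpr hr.symm
  refine (((hasDerivAt_exp_neg_mul_one_sub a 1).const_mul r).const_sub 1).fun_div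
    ((hasDerivAt_exp_neg_mul_one_sub b 1).const_mul (1 - r)) (by simpa using hr')
    |>.congr_deriv ?_
  simp only [sub_self, mul_zero, Real.exp_zero, mul_one]
  field_simp
  ring

theorem hasDerivAt_exp_div_sub {f : ℝ → ℝ} {d : ℝ} (hf : HasDerivAt f d 1) (a : ℝ) :
    HasDerivAt (fun x => Real.exp (-a * (1 - x)) / x - f x) (a - 1 - d) 1 := by
  refine (((hasDerivAt_exp_neg_mul_one_sub a 1).div (hasDerivAt_id 1) one_ne_zero).fun_sub
    hf).congr_deriv ?_
  simp

theorem hasDerivAt_one_add_inv_sub_mul_exp_sub {f : ℝ → ℝ} {d : ℝ} (hf : HasDerivAt f d 1)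
    (r a b : ℝ) :
    HasDerivAt (fun x => 1 + (1 / x - r) * Real.exp (-a * (1 - x))
      - (1 - r) * Real.exp (-b * (1 - x)) - f x) ((1 - r) * (a - b) - 1 - d) 1 := by
  have hinv : HasDerivAt (fun x : ℝ => 1 / x - r) (-1) 1 := by
    simpa using (hasDerivAt_inv one_ne_zero).sub_const r
  refine ((((hinv.mul (hasDerivAt_exp_neg_mul_one_sub a 1)).const_add 1).fun_sub
    ((hasDerivAt_exp_neg_mul_one_sub b 1).const_mul (1 - r))).fun_sub hf).congr_deriv ?_
  simp only [sub_self, mul_zero, Real.exp_zero, mul_one, div_one, sub_left_inj]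
  ring

theorem greedy_idle_probability_general
    (lam σ T r : ℝ)
    (hr1 : r < 1) (W : ℕ)
    (u S f R Q : ℝ → ℝ)
    (hu : ∀ x : ℝ, u x
      = (1 - r * Real.exp (-(lam * T) * (1 - x))) / ((1 - r) * Real.exp (-(lam * σ) * (1 - x))))
    (hS : ∀ x : ℝ, S x = ∑ i ∈ Finset.range (W + 1), u x ^ i)
    (hf : ∀ x : ℝ, f x = ((W : ℝ) + 1) * u x ^ W / S x)
    (hR : ∀ x : ℝ, R x = Real.exp (-(lam * T) * (1 - x)) / x - f x)
    (hQ : ∀ x : ℝ, Q x = 1 + (1 / x - r) * Real.exp (-(lam * T) * (1 - x))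
        - (1 - r) * Real.exp (-(lam * σ) * (1 - x)) - f x)
    (A B : ℝ)
    (hA : A = (1 - r) * (T - σ) + W * (r * T + (1 - r) * σ) / (2 * (1 - r)))
    (hB : B = T + W * (r * T + (1 - r) * σ) / (2 * (1 - r)))
    (hergo : lam * B < 1)
    (p00 : ℝ) (F0 : ℝ → ℝ)
    (hcont : ContinuousOn F0 (Set.Icc 0 1))
    (heq : ∀ x ∈ Set.Ico (0 : ℝ) 1, R x * F0 x = p00 * Q x)
    (hnorm : F0 1 + ((W : ℝ) / (2 * (1 - r))) * (F0 1 - p00) = 1) :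
    p00 = (1 - lam * B) / (1 - lam * A + lam * W * (B - A) / (2 * (1 - r))) := by
  have hr : 1 - r ≠ 0 := sub_ne_zero.mpr hr1.ne'
  have hu1 : u 1 = 1 := by simp [hu, hr]
  have hf1 : f 1 = 1 := by simp [hf, hS, hu1]; positivity
  set c := -(r * (lam * T) + (1 - r) * (lam * σ)) / (1 - r) with hc
  have hu' : HasDerivAt u c 1 :=
    funext hu ▸ hasDerivAt_one_sub_mul_exp_div_mul_exp hr1.ne (lam * T) (lam * σ)
  have hf' : HasDerivAt f (c * W / 2) 1 := by
    rw [funext hf, funext hS]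
    exact hasDerivAt_pow_div_geom_sum_of_eq_one W hu' hu1
  have hR' : HasDerivAt R (lam * B - 1) 1 := by
    refine funext hR ▸ (hasDerivAt_exp_div_sub hf' _).congr_deriv ?_
    rw [hB, hc]; field_simp; ring
  have hQ' : HasDerivAt Q (lam * A - 1) 1 := by
    refine funext hQ ▸ (hasDerivAt_one_add_inv_sub_mul_exp_sub hf' r _ _).congr_deriv ?_
    rw [hA, hc]; field_simp; ring
  have hB1 : lam * B - 1 ≠ 0 := by linarith
  have := right_nhdsWithin_Ico_neBot (zero_lt_one' ℝ)
  have hF1 : F0 1 = p00 * ((lam * A - 1) / (lam * B - 1)) :=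
    eq_mul_div_of_mul_eq_of_hasDerivAt
      ((hcont 1 (by simp)).mono Set.Ico_subset_Icc_self) (by simp) hR' hQ'
      (by simp [hR, hf1]) (by simp [hQ, hf1]) hB1 heq
  have hp : p00 * (1 - lam * A + lam * W * (B - A) / (2 * (1 - r))) = 1 - lam * B := by
    rw [hF1] at hnorm
    field_simp at hnorm ⊢
    linarith
  rw [eq_div_iff fun h => by simp [h] at hp; linarith, hp]

/-- Under the ergodicity condition `λB < 1`, the normalization
condition determines the idle probability
`p₀₀ = (1-λB)/(1-λA+λW(B-A)/(2(1-r)))`. -/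
theorem greedy_idle_probability
    (lam σ T r : ℝ) (hlam : 0 < lam) (hσ : 0 < σ) (hT : 0 < T)
    (hr0 : 0 < r) (hr1 : r < 1) (W : ℕ) (hW : 1 ≤ W)
    (u S f R Q : ℝ → ℝ)
    (hu : ∀ x : ℝ, u x
      = (1 - r * Real.exp (-(lam * T) * (1 - x))) / ((1 - r) * Real.exp (-(lam * σ) * (1 - x))))
    (hS : ∀ x : ℝ, S x = ∑ i ∈ Finset.range (W + 1), u x ^ i)
    (hf : ∀ x : ℝ, f x = ((W : ℝ) + 1) * u x ^ W / S x)
    (hR : ∀ x : ℝ, R x = Real.exp (-(lam * T) * (1 - x)) / x - f x)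
    (hQ : ∀ x : ℝ, Q x = 1 + (1 / x - r) * Real.exp (-(lam * T) * (1 - x))
        - (1 - r) * Real.exp (-(lam * σ) * (1 - x)) - f x)
    (A B : ℝ)
    (hA : A = (1 - r) * (T - σ) + W * (r * T + (1 - r) * σ) / (2 * (1 - r)))
    (hB : B = T + W * (r * T + (1 - r) * σ) / (2 * (1 - r)))
    (hergo : lam * B < 1)
    (p00 : ℝ) (F0 : ℝ → ℝ)
    (hcont : ContinuousOn F0 (Set.Icc 0 1))
    (heq : ∀ x ∈ Set.Ico (0 : ℝ) 1, R x * F0 x = p00 * Q x)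
    (hnorm : F0 1 + ((W : ℝ) / (2 * (1 - r))) * (F0 1 - p00) = 1) :
    p00 = (1 - lam * B) / (1 - lam * A + lam * W * (B - A) / (2 * (1 - r))) :=
  greedy_idle_probability_general lam σ T r hr1 W u S f R Q hu hS hf hR hQ A B hA hB hergo p00 F0
    hcont heq hnorm
end

section
/- Assume λB < 1, where B = T + W·(rT+(1−r)σ)/(2(1−r)); equivalently, λ < 1/( T·(1 + rW/(2(1−r))) + Wσ/2 ). Then for every complex x with |x| ≤ 1 and x ≠ 1, one has exp(−λT(1−x))·∑_{i=0}^{W} u(x)^i ≠ (W+1)·x·u(x)^W; in other words, x=1 is the only solution of g(x)=h(x) in the closed unit disk. -/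
/-!
Put `s = 1 - x`, `z = exp (-λT s)` and `v = 1 / u(x) = (1 - r) exp (-λσ s) / (1 - r z)`.
Since `Re s ≥ 0` and `exp` is `1`-Lipschitz on the left half-plane, `‖z - 1‖ ≤ λT ‖s‖`,
`‖v‖ ≤ 1` and `‖v - 1‖ ≤ (λσ + r λT / (1 - r)) ‖s‖`. Multiplying `g(x) = h(x)` by `v ^ W` gives
`z ∑_{j ≤ W} v ^ j = (W + 1) x`, i.e. `(W + 1) s = ∑_{j ≤ W} (1 - z v ^ j)`; bounding each term by
`‖z - 1‖ + j ‖v - 1‖` yields `‖s‖ ≤ λB ‖s‖`, which forces `s = 0` when `λB < 1`.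
-/

open Finset Complex

theorem Complex.norm_exp_le_one_of_re_nonpos {w : ℂ} (hw : w.re ≤ 0) : ‖exp w‖ ≤ 1 := by
  rw [norm_exp]
  exact Real.exp_le_one_iff.2 hw

theorem Complex.norm_exp_sub_one_le_of_re_nonpos {w : ℂ} (hw : w.re ≤ 0) :
    ‖exp w - 1‖ ≤ ‖w‖ := by
  simpa using (convex_halfSpace_re_le (0 : ℝ)).norm_image_sub_le_of_norm_deriv_le
    (f := exp) (C := 1) (fun _ _ => differentiableAt_exp)
    (fun z hz => by simpa [norm_exp] using hz) (x := 0) (by simp) hw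

section ExpOneSub

variable {c : ℝ} {x : ℂ}

theorem Complex.re_neg_ofReal_mul_one_sub_nonpos (hc : 0 ≤ c) (hx : ‖x‖ ≤ 1) :
    (-(c : ℂ) * (1 - x)).re ≤ 0 := by
  have : 0 ≤ 1 - x.re := by linarith [re_le_norm x]
  simpa using mul_nonneg hc this

theorem Complex.norm_exp_neg_ofReal_mul_one_sub_le_one (hc : 0 ≤ c) (hx : ‖x‖ ≤ 1) :
    ‖exp (-(c : ℂ) * (1 - x))‖ ≤ 1 :=
  norm_exp_le_one_of_re_nonpos (re_neg_ofReal_mul_one_sub_nonpos hc hx)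

theorem Complex.norm_exp_neg_ofReal_mul_one_sub_sub_one_le (hc : 0 ≤ c) (hx : ‖x‖ ≤ 1) :
    ‖exp (-(c : ℂ) * (1 - x)) - 1‖ ≤ c * ‖1 - x‖ := by
  refine (norm_exp_sub_one_le_of_re_nonpos (re_neg_ofReal_mul_one_sub_nonpos hc hx)).trans_eq ?_
  rw [norm_mul, norm_neg, norm_real, Real.norm_of_nonneg hc]

end ExpOneSub

section Quotient

variable {r : ℝ} {y z : ℂ}

theorem Complex.one_sub_le_norm_one_sub_ofReal_mul (hr : 0 ≤ r) (hz : ‖z‖ ≤ 1) :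
    1 - r ≤ ‖1 - r * z‖ := calc
  1 - r ≤ ‖(1 : ℂ)‖ - ‖(r : ℂ) * z‖ := by
    rw [norm_one, norm_mul, norm_real, Real.norm_of_nonneg hr]
    nlinarith
  _ ≤ ‖1 - r * z‖ := norm_sub_norm_le _ _

theorem Complex.one_sub_ofReal_mul_ne_zero (hr0 : 0 ≤ r) (hr1 : r < 1) (hz : ‖z‖ ≤ 1) :
    (1 : ℂ) - r * z ≠ 0 :=
  norm_pos_iff.1 ((sub_pos.2 hr1).trans_le (one_sub_le_norm_one_sub_ofReal_mul hr0 hz))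

theorem Complex.norm_div_one_sub_ofReal_mul_le_one (hr0 : 0 ≤ r) (hr1 : r < 1) (hy : ‖y‖ ≤ 1)
    (hz : ‖z‖ ≤ 1) : ‖(1 - r) * y / (1 - r * z)‖ ≤ 1 := by
  have hb := one_sub_le_norm_one_sub_ofReal_mul hr0 hz
  have h1r : ‖(1 : ℂ) - r‖ = 1 - r := by
    rw [← ofReal_one, ← ofReal_sub, norm_real, Real.norm_of_nonneg (by linarith)]
  rw [norm_div, div_le_one (by linarith), norm_mul, h1r]
  nlinarith

theorem Complex.norm_div_one_sub_ofReal_mul_sub_one_le (hr0 : 0 ≤ r) (hr1 : r < 1)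
    (hz : ‖z‖ ≤ 1) : ‖(1 - r) * y / (1 - r * z) - 1‖ ≤ ‖y - 1‖ + r / (1 - r) * ‖z - 1‖ := by
  have h1r : 0 < 1 - r := by linarith
  have hb := one_sub_le_norm_one_sub_ofReal_mul hr0 hz
  have hnum : ‖(1 - r) * y - (1 - r * z)‖ ≤ (1 - r) * ‖y - 1‖ + r * ‖z - 1‖ := calc
    ‖(1 - r) * y - (1 - r * z)‖ = ‖((1 - r : ℝ) : ℂ) * (y - 1) + (r : ℂ) * (z - 1)‖ := by
      push_cast; ring_nf
    _ ≤ (1 - r) * ‖y - 1‖ + r * ‖z - 1‖ := by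
      refine (norm_add_le _ _).trans_eq ?_
      rw [norm_mul, norm_mul, norm_real, norm_real, Real.norm_of_nonneg h1r.le,
        Real.norm_of_nonneg hr0]
  rw [div_sub_one (one_sub_ofReal_mul_ne_zero hr0 hr1 hz), norm_div,
    div_le_iff₀ (h1r.trans_le hb)]
  calc _ ≤ (1 - r) * ‖y - 1‖ + r * ‖z - 1‖ := hnum
    _ = (‖y - 1‖ + r / (1 - r) * ‖z - 1‖) * (1 - r) := by field_simp
    _ ≤ _ := mul_le_mul_of_nonneg_left hb (by positivity)

end Quotient

theorem geom_sum_mul_inv_pow {K : Type*} [Field K] {u : K} (hu : u ≠ 0) (n : ℕ) :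
    (∑ i ∈ range (n + 1), u ^ i) * u⁻¹ ^ n = ∑ i ∈ range (n + 1), u⁻¹ ^ i := by
  rw [sum_mul, ← sum_range_reflect]
  refine sum_congr rfl fun i hi => ?_
  obtain ⟨k, rfl⟩ := Nat.exists_eq_add_of_le (Nat.lt_succ_iff.mp (mem_range.mp hi))
  rw [Nat.add_sub_cancel, Nat.add_sub_cancel_left, pow_add, mul_left_comm, ← mul_pow,
    mul_inv_cancel₀ hu, one_pow, mul_one]

theorem mul_geom_sum_inv_eq_of_mul_geom_sum_eq {K : Type*} [Field K] {u z c : K} {n : ℕ}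
    (hu : u ≠ 0) (h : z * ∑ i ∈ range (n + 1), u ^ i = c * u ^ n) :
    z * ∑ i ∈ range (n + 1), u⁻¹ ^ i = c := by
  rw [← geom_sum_mul_inv_pow hu, ← mul_assoc, h, mul_assoc, ← mul_pow, mul_inv_cancel₀ hu,
    one_pow, mul_one]

section NormedRing

variable {R : Type*} [NormedRing R] [NormOneClass R] {v : R}

theorem norm_pow_sub_one_le (hv : ‖v‖ ≤ 1) (n : ℕ) : ‖v ^ n - 1‖ ≤ n * ‖v - 1‖ := by
  rw [← geom_sum_mul]
  refine (norm_mul_le _ _).trans (mul_le_mul_of_nonneg_right ?_ (norm_nonneg _))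
  refine (norm_sum_le _ _).trans ?_
  simpa using sum_le_sum fun k (_ : k ∈ range n) =>
    (norm_pow_le v k).trans (pow_le_one₀ (norm_nonneg v) hv)

theorem norm_mul_pow_sub_one_le (hv : ‖v‖ ≤ 1) (z : R) (n : ℕ) :
    ‖z * v ^ n - 1‖ ≤ ‖z - 1‖ + n * ‖v - 1‖ := calc
  ‖z * v ^ n - 1‖ = ‖(z - 1) * v ^ n + (v ^ n - 1)‖ := by noncomm_ring
  _ ≤ ‖z - 1‖ * 1 + n * ‖v - 1‖ := by
    refine (norm_add_le _ _).trans (add_le_add ?_ (norm_pow_sub_one_le hv n))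
    exact (norm_mul_le _ _).trans (mul_le_mul_of_nonneg_left
      ((norm_pow_le v n).trans (pow_le_one₀ (norm_nonneg v) hv)) (norm_nonneg _))
  _ = ‖z - 1‖ + n * ‖v - 1‖ := by rw [mul_one]

theorem norm_mul_geom_sum_sub_le (hv : ‖v‖ ≤ 1) (z : R) (n : ℕ) :
    ‖z * ∑ j ∈ range (n + 1), v ^ j - (n + 1 : R)‖ ≤
      (n + 1) * ‖z - 1‖ + n * (n + 1) / 2 * ‖v - 1‖ := by
  have hgauss : ∑ j ∈ range (n + 1), (j : ℝ) = n * (n + 1) / 2 := by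
    have := sum_range_id_mul_two (n + 1)
    rw [Nat.add_sub_cancel] at this
    rw [← Nat.cast_sum, eq_div_iff two_ne_zero]
    exact_mod_cast this.trans (mul_comm _ _)
  calc ‖z * ∑ j ∈ range (n + 1), v ^ j - (n + 1 : R)‖
      = ‖∑ j ∈ range (n + 1), (z * v ^ j - 1)‖ := by
        rw [sum_sub_distrib, mul_sum]
        simp
    _ ≤ ∑ j ∈ range (n + 1), (‖z - 1‖ + j * ‖v - 1‖) :=
        (norm_sum_le _ _).trans (sum_le_sum fun j _ => norm_mul_pow_sub_one_le hv z j)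
    _ = (n + 1) * ‖z - 1‖ + n * (n + 1) / 2 * ‖v - 1‖ := by
        rw [sum_add_distrib, ← sum_mul, hgauss]
        simp

end NormedRing

theorem Complex.norm_one_sub_le_of_mul_geom_sum_eq {v z x : ℂ} {n : ℕ} (hv : ‖v‖ ≤ 1)
    (h : z * ∑ j ∈ range (n + 1), v ^ j = (n + 1) * x) :
    ‖1 - x‖ ≤ ‖z - 1‖ + n / 2 * ‖v - 1‖ := by
  have key := norm_mul_geom_sum_sub_le hv z n
  rw [h, ← norm_neg, show -((n + 1) * x - (n + 1)) = ((n + 1 : ℝ) : ℂ) * (1 - x) by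
    push_cast; ring, norm_mul, norm_real, Real.norm_of_nonneg (by positivity)] at key
  have hn : (0 : ℝ) < n + 1 := by positivity
  nlinarith

theorem greedy_no_other_zero_in_disk_general
    (lam σ T r : ℝ) (hlam : 0 < lam) (hσ : 0 < σ) (hT : 0 < T)
    (hr0 : 0 < r) (hr1 : r < 1) (W : ℕ)
    (B : ℝ) (hB : B = T + W * (r * T + (1 - r) * σ) / (2 * (1 - r)))
    (hergo : lam * B < 1)
    (a b : ℂ → ℂ) (u : ℂ → ℂ)
    (ha : ∀ x : ℂ, a x = (1 - (r : ℂ)) * Complex.exp (-((lam : ℂ) * σ) * (1 - x)))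
    (hb : ∀ x : ℂ, b x = 1 - (r : ℂ) * Complex.exp (-((lam : ℂ) * T) * (1 - x)))
    (hu : ∀ x : ℂ, u x = b x / a x)
    (x : ℂ) (hx : ‖x‖ ≤ 1) (hx1 : x ≠ 1) :
    Complex.exp (-((lam : ℂ) * T) * (1 - x)) * ∑ i ∈ Finset.range (W + 1), u x ^ i
      ≠ ((W : ℂ) + 1) * x * u x ^ W := by
  intro heq
  simp only [← ofReal_mul] at ha hb heq
  set z := exp (-((lam * T : ℝ) : ℂ) * (1 - x))
  set y := exp (-((lam * σ : ℝ) : ℂ) * (1 - x))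
  have hz : ‖z‖ ≤ 1 := norm_exp_neg_ofReal_mul_one_sub_le_one (by positivity) hx
  have hy : ‖y‖ ≤ 1 := norm_exp_neg_ofReal_mul_one_sub_le_one (by positivity) hx
  have hz1 : ‖z - 1‖ ≤ lam * T * ‖1 - x‖ :=
    norm_exp_neg_ofReal_mul_one_sub_sub_one_le (by positivity) hx
  have hy1 : ‖y - 1‖ ≤ lam * σ * ‖1 - x‖ :=
    norm_exp_neg_ofReal_mul_one_sub_sub_one_le (by positivity) hx
  have hv : (u x)⁻¹ = (1 - r) * y / (1 - r * z) := by rw [hu, ha, hb, inv_div]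
  have hu0 : u x ≠ 0 := by
    rw [hu, ha, hb]
    refine div_ne_zero (one_sub_ofReal_mul_ne_zero hr0.le hr1 hz) (mul_ne_zero ?_ (exp_ne_zero _))
    exact sub_ne_zero.2 (by exact_mod_cast hr1.ne')
  have key := norm_one_sub_le_of_mul_geom_sum_eq
    (hv ▸ norm_div_one_sub_ofReal_mul_le_one hr0.le hr1 hy hz)
    (mul_geom_sum_inv_eq_of_mul_geom_sum_eq hu0 heq)
  have hv1 : ‖(u x)⁻¹ - 1‖ ≤ (lam * σ + r / (1 - r) * (lam * T)) * ‖1 - x‖ := by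
    have h1r : 0 ≤ r / (1 - r) := div_nonneg hr0.le (by linarith)
    nlinarith [hv ▸ norm_div_one_sub_ofReal_mul_sub_one_le (y := y) hr0.le hr1 hz,
      mul_le_mul_of_nonneg_left hz1 h1r]
  have hlamB : lam * B = lam * T + W / 2 * (lam * σ + r / (1 - r) * (lam * T)) := by
    have : 1 - r ≠ 0 := (sub_pos.2 hr1).ne'
    rw [hB]; field_simp; ring
  have hle : ‖1 - x‖ ≤ lam * B * ‖1 - x‖ := by
    rw [hlamB]
    nlinarith [mul_le_mul_of_nonneg_left hv1 (by positivity : (0 : ℝ) ≤ W / 2)]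
  exact (mul_lt_of_lt_one_left (norm_pos_iff.2 (sub_ne_zero.2 hx1.symm)) hergo).not_ge hle

/-- Under the ergodicity condition `λB < 1`, the point `x = 1` is
the only solution of `g(x) = h(x)` in the closed unit disk. -/
theorem greedy_no_other_zero_in_disk
    (lam σ T r : ℝ) (hlam : 0 < lam) (hσ : 0 < σ) (hT : 0 < T)
    (hr0 : 0 < r) (hr1 : r < 1) (W : ℕ) (hW : 1 ≤ W)
    (B : ℝ) (hB : B = T + W * (r * T + (1 - r) * σ) / (2 * (1 - r)))
    (hergo : lam * B < 1)
    (a b : ℂ → ℂ) (u : ℂ → ℂ)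
    (ha : ∀ x : ℂ, a x = (1 - (r : ℂ)) * Complex.exp (-((lam : ℂ) * σ) * (1 - x)))
    (hb : ∀ x : ℂ, b x = 1 - (r : ℂ) * Complex.exp (-((lam : ℂ) * T) * (1 - x)))
    (hu : ∀ x : ℂ, u x = b x / a x)
    (x : ℂ) (hx : ‖x‖ ≤ 1) (hx1 : x ≠ 1) :
    Complex.exp (-((lam : ℂ) * T) * (1 - x)) * ∑ i ∈ Finset.range (W + 1), u x ^ i
      ≠ ((W : ℂ) + 1) * x * u x ^ W :=
  greedy_no_other_zero_in_disk_general lam σ T r hlam hσ hT hr0 hr1 W B hB hergo a b u ha hb hu x hx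
    hx1
end

section
/- Let q : ℕ×ℕ → ℝ be nonnegative with q(k,n)=0 whenever k>W, with ∑_{k,n} q(k,n) < ∞, and suppose q satisfies the stationary Kolmogorov equations of the fair load model: for all n≥1 and all 0≤k≤W, q(k,n) = 1_{k<W}·(1−r)·∑_{i=0}^{n} π_σ(i)·q(k+1,n−i) + 1_{k>0}·r·∑_{i=0}^{n} π_T(i)·q(k,n−i) + (1/(W+1))·[ r·∑_{i=0}^{n} π_T(i)·q(0,n+1−i) + (1−r)·∑_{i=0}^{n} π_σ(i)·q(0,n−i) ] + (r·π_T(n)/(W+1))·q(0,0); together with the boundary conditions q(k,0)=0 for all 1≤k≤W, and r·exp(−λT)·q(0,1) = q(0,0)·(1 − r·exp(−λT) − (1−r)·exp(−λσ)). Then for every complex x with 0<|x|<1, the generating functions G_k(x) = ∑_{n≥0} q(k,n)·x^n satisfy: a(x)·G_1(x) = G_0(x) − q(0,0) + D(x); a(x)·G_{k+1}(x) = b(x)·G_k(x) + D(x) for all 1≤k≤W−1; and b(x)·G_W(x) + D(x) = 0, where D(x) = −(G_0(x)/(W+1))·[ r·exp(−λT(1−x))/x + (1−r)·exp(−λσ(1−x))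 ] + (q(0,0)/(W+1))·[ 1 + r·(1/x − 1)·exp(−λT(1−x)) ]. -/
/-!
Multiply the Kolmogorov equation for `q (k, n + 1)` by `x ^ (n + 1)` and sum over `n`. Each
Poisson convolution `∑ i, π_c(i) f(n - i)` is a Cauchy product, so its generating function is the
product of `exp (-c (1 - x)) = ∑ π_c(i) x^i` with that of `f`; all series converge absolutely
because `‖x‖ ≤ 1` and real summable families are absolutely summable. The index shift in
`q (0, n + 1 - i)` divides `G 0 - q (0, 0)` by `x`, and the boundary relation for `q (0, 1)` turns
the resulting row identities into the stated system.
-/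

open Finset

theorem HasSum.nat_succ {G : Type*} [AddCommGroup G] [TopologicalSpace G] [IsTopologicalAddGroup G]
    {f : ℕ → G} {a : G} (h : HasSum f a) : HasSum (fun n => f (n + 1)) (a - f 0) := by
  simpa using (hasSum_nat_add_iff' 1).2 h

noncomputable def poissonWeight (c : ℝ) (i : ℕ) : ℝ := Real.exp (-c) * c ^ i / i.factorial

lemma poissonWeight_zero (c : ℝ) : poissonWeight c 0 = Real.exp (-c) := by
  simp [poissonWeight]

lemma summable_norm_poissonWeight_mul_pow (c : ℝ) (x : ℂ) :
    Summable fun i => ‖(poissonWeight c i : ℂ) * x ^ i‖ := by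
  refine ((Real.summable_pow_div_factorial (|c| * ‖x‖)).mul_left (Real.exp (-c))).congr
    fun i => ?_
  rw [norm_mul, Complex.norm_real, norm_pow, Real.norm_eq_abs, poissonWeight, abs_div, abs_mul,
    abs_pow, Real.abs_exp, Nat.abs_cast, mul_pow]
  ring

lemma hasSum_poissonWeight_mul_pow (c : ℝ) (x : ℂ) :
    HasSum (fun i => (poissonWeight c i : ℂ) * x ^ i) (Complex.exp (-c * (1 - x))) := by
  have h := (NormedSpace.expSeries_div_hasSum_exp ((c : ℂ) * x)).mul_left (Complex.exp (-c))
  rw [← Complex.exp_eq_exp_ℂ, ← Complex.exp_add] at h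
  have e : (fun i => (poissonWeight c i : ℂ) * x ^ i)
      = fun i => Complex.exp (-c) * ((c * x) ^ i / i.factorial) := by
    funext i
    push_cast [poissonWeight]
    ring
  rwa [e, show -(c : ℂ) * (1 - x) = -c + c * x by ring]

lemma summable_norm_ofReal_mul_pow {f : ℕ → ℝ} (hf : Summable f) {x : ℂ}
    (hx : ‖x‖ ≤ 1) :
    Summable fun n => ‖(f n : ℂ) * x ^ n‖ := by
  refine (summable_norm_iff.2 hf).of_nonneg_of_le (fun n => norm_nonneg _) fun n => ?_
  rw [norm_mul, Complex.norm_real, norm_pow]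
  exact mul_le_of_le_one_right (norm_nonneg _) (pow_le_one₀ (norm_nonneg x) hx)

lemma hasSum_poissonWeight_conv_mul_pow (c : ℝ) {f : ℕ → ℝ} (hf : Summable f) {x : ℂ}
    (hx : ‖x‖ ≤ 1) {F : ℂ} (hF : HasSum (fun n => (f n : ℂ) * x ^ n) F) :
    HasSum (fun n => ((∑ i ∈ range (n + 1), poissonWeight c i * f (n - i) : ℝ) : ℂ) * x ^ n)
      (Complex.exp (-c * (1 - x)) * F) := by
  have h := hasSum_sum_range_mul_of_summable_norm (summable_norm_poissonWeight_mul_pow c x)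
    (summable_norm_ofReal_mul_pow hf hx)
  rw [(hasSum_poissonWeight_mul_pow c x).tsum_eq, hF.tsum_eq] at h
  convert! h using 2 with n
  push_cast
  rw [sum_mul]
  refine sum_congr rfl fun i hi => ?_
  rw [← pow_mul_pow_sub x (Nat.lt_succ_iff.mp (mem_range.mp hi))]
  ring

lemma hasSum_poissonWeight_conv_succ (c : ℝ) {f : ℕ → ℝ} (hf : Summable f) {x : ℂ}
    (hx : ‖x‖ ≤ 1) {F : ℂ} (hF : HasSum (fun n => (f n : ℂ) * x ^ n) F) :
    HasSum (fun n => ((∑ i ∈ range (n + 1 + 1), poissonWeight c i * f (n + 1 - i) : ℝ) : ℂ)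
        * x ^ (n + 1))
      (Complex.exp (-c * (1 - x)) * F - Real.exp (-c) * f 0) := by
  simpa [poissonWeight_zero] using (hasSum_poissonWeight_conv_mul_pow c hf hx hF).nat_succ

lemma HasSum.succ_mul_pow_div {f : ℕ → ℝ} {x : ℂ} {F : ℂ}
    (hF : HasSum (fun n => (f n : ℂ) * x ^ n) F) (hx : x ≠ 0) :
    HasSum (fun n => (f (n + 1) : ℂ) * x ^ n) ((F - f 0) / x) := by
  convert! hF.nat_succ.div_const x using 2 with n
  · field_simp; ring
  · simp

/-- `s` and `t` stand for the Poisson means `λσ` and `λT`. -/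
def FairLoadKolmogorov (s t r : ℝ) (W : ℕ) (q : ℕ × ℕ → ℝ) : Prop :=
  ∀ n : ℕ, 1 ≤ n → ∀ k : ℕ, k ≤ W →
    q (k, n)
      = (if k < W then (1 - r) else 0)
          * ∑ i ∈ range (n + 1), poissonWeight s i * q (k + 1, n - i)
        + (if 0 < k then r else 0)
          * ∑ i ∈ range (n + 1), poissonWeight t i * q (k, n - i)
        + (1 / ((W : ℝ) + 1))
          * (r * ∑ i ∈ range (n + 1), poissonWeight t i * q (0, n + 1 - i)
             + (1 - r) * ∑ i ∈ range (n + 1), poissonWeight s i * q (0, n - i))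
        + (r * poissonWeight t n / ((W : ℝ) + 1)) * q (0, 0)

namespace FairLoadKolmogorov

variable {s t r : ℝ} {W : ℕ} {q : ℕ × ℕ → ℝ}

lemma genFun_sub_eq (hq : FairLoadKolmogorov s t r W q) (hsum : Summable q) {x : ℂ}
    (hx : ‖x‖ ≤ 1) (hx0 : x ≠ 0) {G : ℕ → ℂ}
    (hG : ∀ k, HasSum (fun n => (q (k, n) : ℂ) * x ^ n) (G k)) {k : ℕ} (hk : k ≤ W) :
    G k - q (k, 0)
      = (if k < W then 1 - (r : ℂ) else 0)
          * (Complex.exp (-s * (1 - x)) * G (k + 1) - Real.exp (-s) * q (k + 1, 0))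
        + (if 0 < k then (r : ℂ) else 0)
          * (Complex.exp (-t * (1 - x)) * G k - Real.exp (-t) * q (k, 0))
        + 1 / ((W : ℂ) + 1)
          * (r * (Complex.exp (-t * (1 - x)) * ((G 0 - q (0, 0)) / x) - Real.exp (-t) * q (0, 1))
            + (1 - r) * (Complex.exp (-s * (1 - x)) * G 0 - Real.exp (-s) * q (0, 0)))
        + r * q (0, 0) / ((W : ℂ) + 1) * (Complex.exp (-t * (1 - x)) - Real.exp (-t)) := by
  have hrow (j : ℕ) : Summable fun n => q (j, n) :=
    hsum.comp_injective (Prod.mk_right_injective j)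
  have hσNext := hasSum_poissonWeight_conv_succ s (hrow (k + 1)) hx (hG (k + 1))
  have hTSame := hasSum_poissonWeight_conv_succ t (hrow k) hx (hG k)
  have hG0 := (hG 0).succ_mul_pow_div hx0
  have hTZero := hasSum_poissonWeight_conv_succ t ((summable_nat_add_iff 1).2 (hrow 0)) hx hG0
  have hσZero := hasSum_poissonWeight_conv_succ s (hrow 0) hx (hG 0)
  have hTWeight := (hasSum_poissonWeight_mul_pow t x).nat_succ
  have hLeft := (hG k).nat_succ
  rw [pow_zero, mul_one] at hLeft
  have hRight := (((hσNext.mul_left (if k < W then 1 - (r : ℂ) else 0)).add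
    (hTSame.mul_left (if 0 < k then (r : ℂ) else 0))).add
    (((hTZero.mul_left (r : ℂ)).add (hσZero.mul_left (1 - (r : ℂ)))).mul_left
      (1 / ((W : ℂ) + 1)))).add
    (hTWeight.mul_left ((r : ℂ) * q (0, 0) / ((W : ℂ) + 1)))
  rw [poissonWeight_zero, pow_zero, mul_one, zero_add] at hRight
  refine hLeft.unique ?_
  convert! hRight using 2 with n
  have hidx : ∑ i ∈ range (n + 1 + 1), poissonWeight t i * q (0, n + 1 + 1 - i)
      = ∑ i ∈ range (n + 1 + 1), poissonWeight t i * q (0, n + 1 - i + 1) :=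
    sum_congr rfl fun i hi => by rw [Nat.sub_add_comm (Nat.lt_succ_iff.mp (mem_range.mp hi))]
  rw [hq (n + 1) n.succ_pos k hk, hidx]
  split_ifs <;> push_cast <;> ring

end FairLoadKolmogorov

theorem fair_generating_function_system_general
    (lam σ T r : ℝ) (W : ℕ) (hW : 1 ≤ W)
    (q : ℕ × ℕ → ℝ)
    (hsum : Summable q)
    (hKol : ∀ n : ℕ, 1 ≤ n → ∀ k : ℕ, k ≤ W →
      q (k, n)
        = (if k < W then (1 - r) else 0)
            * ∑ i ∈ Finset.range (n + 1),
                Real.exp (-(lam * σ)) * (lam * σ) ^ i / (i.factorial : ℝ) * q (k + 1, n - i)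
          + (if 0 < k then r else 0)
            * ∑ i ∈ Finset.range (n + 1),
                Real.exp (-(lam * T)) * (lam * T) ^ i / (i.factorial : ℝ) * q (k, n - i)
          + (1 / ((W : ℝ) + 1))
            * (r * ∑ i ∈ Finset.range (n + 1),
                  Real.exp (-(lam * T)) * (lam * T) ^ i / (i.factorial : ℝ) * q (0, n + 1 - i)
               + (1 - r) * ∑ i ∈ Finset.range (n + 1),
                  Real.exp (-(lam * σ)) * (lam * σ) ^ i / (i.factorial : ℝ) * q (0, n - i))
          + (r * (Real.exp (-(lam * T)) * (lam * T) ^ n / (n.factorial : ℝ)) / ((W : ℝ) + 1))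
            * q (0, 0))
    (hbd0 : ∀ k : ℕ, 1 ≤ k → k ≤ W → q (k, 0) = 0)
    (hbd1 : r * Real.exp (-(lam * T)) * q (0, 1)
      = q (0, 0) * (1 - r * Real.exp (-(lam * T)) - (1 - r) * Real.exp (-(lam * σ))))
    (x : ℂ) (hx0 : 0 < ‖x‖) (hx1 : ‖x‖ < 1)
    (G : ℕ → ℂ) (hG : ∀ k : ℕ, G k = ∑' n : ℕ, (q (k, n) : ℂ) * x ^ n)
    (a b D : ℂ)
    (ha : a = (1 - (r : ℂ)) * Complex.exp (-((lam : ℂ) * σ) * (1 - x)))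
    (hb : b = 1 - (r : ℂ) * Complex.exp (-((lam : ℂ) * T) * (1 - x)))
    (hD : D = -(G 0 / ((W : ℂ) + 1))
          * ((r : ℂ) * Complex.exp (-((lam : ℂ) * T) * (1 - x)) / x
              + (1 - (r : ℂ)) * Complex.exp (-((lam : ℂ) * σ) * (1 - x)))
        + ((q (0, 0) : ℂ) / ((W : ℂ) + 1))
          * (1 + (r : ℂ) * (1 / x - 1) * Complex.exp (-((lam : ℂ) * T) * (1 - x)))) :
    a * G 1 = G 0 - (q (0, 0) : ℂ) + D
      ∧ (∀ k : ℕ, 1 ≤ k → k ≤ W - 1 → a * G (k + 1) = b * G k + D)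
      ∧ b * G W + D = 0 := by
  have hx : ‖x‖ ≤ 1 := hx1.le
  have hq : FairLoadKolmogorov (lam * σ) (lam * T) r W q := hKol
  have hGsum (k : ℕ) : HasSum (fun n => (q (k, n) : ℂ) * x ^ n) (G k) := by
    rw [hG k]
    exact (summable_norm_ofReal_mul_pow
      (hsum.comp_injective (Prod.mk_right_injective k)) hx).of_norm.hasSum
  have hrow (k : ℕ) (hk : k ≤ W) := hq.genFun_sub_eq hsum hx (norm_pos_iff.mp hx0) hGsum hk
  have hbd1' : (r : ℂ) * Real.exp (-(lam * T)) * q (0, 1)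
      = q (0, 0) * (1 - r * Real.exp (-(lam * T)) - (1 - r) * Real.exp (-(lam * σ))) := by
    exact_mod_cast hbd1
  subst ha hb hD
  push_cast at hrow hbd1'
  refine ⟨?_, fun k hk1 hk2 => ?_, ?_⟩
  · have h := hrow 0 (Nat.zero_le W)
    rw [if_pos (by omega), if_neg (lt_irrefl 0), hbd0 1 le_rfl hW, Complex.ofReal_zero] at h
    linear_combination -h + 1 / ((W : ℂ) + 1) * hbd1'
  · have h := hrow k (by omega)
    rw [if_pos (by omega), if_pos (by omega), hbd0 k hk1 (by omega),
      hbd0 (k + 1) (by omega) (by omega), Complex.ofReal_zero] at h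
    linear_combination -h + 1 / ((W : ℂ) + 1) * hbd1'
  · have h := hrow W le_rfl
    rw [if_neg (lt_irrefl W), if_pos (by omega), hbd0 W hW le_rfl, Complex.ofReal_zero] at h
    linear_combination h - 1 / ((W : ℂ) + 1) * hbd1'

/-- The generating functions of a stationary solution of the fair
load model's Kolmogorov equations satisfy the linear system of Lemma 2. -/
theorem fair_generating_function_system
    (lam σ T r : ℝ) (hlam : 0 < lam) (hσ : 0 < σ) (hT : 0 < T)
    (hr0 : 0 < r) (hr1 : r < 1) (W : ℕ) (hW : 1 ≤ W)
    (q : ℕ × ℕ → ℝ)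
    (hpos : ∀ k n : ℕ, 0 ≤ q (k, n))
    (hzero : ∀ k n : ℕ, W < k → q (k, n) = 0)
    (hsum : Summable q)
    (hKol : ∀ n : ℕ, 1 ≤ n → ∀ k : ℕ, k ≤ W →
      q (k, n)
        = (if k < W then (1 - r) else 0)
            * ∑ i ∈ Finset.range (n + 1),
                Real.exp (-(lam * σ)) * (lam * σ) ^ i / (i.factorial : ℝ) * q (k + 1, n - i)
          + (if 0 < k then r else 0)
            * ∑ i ∈ Finset.range (n + 1),
                Real.exp (-(lam * T)) * (lam * T) ^ i / (i.factorial : ℝ) * q (k, n - i)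
          + (1 / ((W : ℝ) + 1))
            * (r * ∑ i ∈ Finset.range (n + 1),
                  Real.exp (-(lam * T)) * (lam * T) ^ i / (i.factorial : ℝ) * q (0, n + 1 - i)
               + (1 - r) * ∑ i ∈ Finset.range (n + 1),
                  Real.exp (-(lam * σ)) * (lam * σ) ^ i / (i.factorial : ℝ) * q (0, n - i))
          + (r * (Real.exp (-(lam * T)) * (lam * T) ^ n / (n.factorial : ℝ)) / ((W : ℝ) + 1))
            * q (0, 0))
    (hbd0 : ∀ k : ℕ, 1 ≤ k → k ≤ W → q (k, 0) = 0)
    (hbd1 : r * Real.exp (-(lam * T)) * q (0, 1)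
      = q (0, 0) * (1 - r * Real.exp (-(lam * T)) - (1 - r) * Real.exp (-(lam * σ))))
    (x : ℂ) (hx0 : 0 < ‖x‖) (hx1 : ‖x‖ < 1)
    (G : ℕ → ℂ) (hG : ∀ k : ℕ, G k = ∑' n : ℕ, (q (k, n) : ℂ) * x ^ n)
    (a b D : ℂ)
    (ha : a = (1 - (r : ℂ)) * Complex.exp (-((lam : ℂ) * σ) * (1 - x)))
    (hb : b = 1 - (r : ℂ) * Complex.exp (-((lam : ℂ) * T) * (1 - x)))
    (hD : D = -(G 0 / ((W : ℂ) + 1))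
          * ((r : ℂ) * Complex.exp (-((lam : ℂ) * T) * (1 - x)) / x
              + (1 - (r : ℂ)) * Complex.exp (-((lam : ℂ) * σ) * (1 - x)))
        + ((q (0, 0) : ℂ) / ((W : ℂ) + 1))
          * (1 + (r : ℂ) * (1 / x - 1) * Complex.exp (-((lam : ℂ) * T) * (1 - x)))) :
    a * G 1 = G 0 - (q (0, 0) : ℂ) + D
      ∧ (∀ k : ℕ, 1 ≤ k → k ≤ W - 1 → a * G (k + 1) = b * G k + D)
      ∧ b * G W + D = 0 :=
  fair_generating_function_system_general lam σ T r W hW q hsum hKol hbd0 hbd1 x hx0 hx1 G hG a b D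
    ha hb hD
end

section
/- Let x be a complex number with x≠0, a(x)≠0 and S(x)≠0, let q₀₀ be a complex number, and let G_0, G_1, …, G_W be complex numbers satisfying the linear system: a(x)·G_1 = G_0 − q₀₀ + D; a(x)·G_{k+1} = b(x)·G_k + D for all 1≤k≤W−1; and b(x)·G_W + D = 0, where D = −(G_0/(W+1))·[ r·exp(−λT(1−x))/x + (1−r)·exp(−λσ(1−x)) ] + (q₀₀/(W+1))·[ 1 + r·(1/x−1)·exp(−λT(1−x)) ]. Then for every 1≤k≤W, G_k = ((G_0 − q₀₀)/a(x)) · (∑_{i=k−1}^{W−1} u(x)^i)/S(x), and moreover R̄(x)·G_0 = q₀₀·Q̄(x). -/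
open Finset

/-!
Writing `b = u a` and `c = G₀ - q₀₀`, the system is the first-order recurrence
`a G_{k+1} = u (a G_k) + D` started at `a G₁ = c + D`, so `a G_k = c u^{k-1} + D (1 + ⋯ + u^{k-1})`.
The boundary condition `b G_W + D = 0` then pins down `D S = -c u^W`; substituting back gives
the closed form for `G_k`, and since `f S = (W + 1) u^W` it also gives `f c = -(W + 1) D`, which,
after unfolding `D`, is the relation `R̄ G₀ = q₀₀ Q̄`.
-/

theorem pow_mul_geom_sum_sub_pow_mul_geom_sum {R : Type*} [CommRing R] (u : R) {m n : ℕ}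
    (hmn : m ≤ n) :
    u ^ m * ∑ i ∈ range (n + 1), u ^ i - u ^ n * ∑ i ∈ range (m + 1), u ^ i
      = ∑ i ∈ Ico m n, u ^ i := by
  have shift : ∀ p N : ℕ, u ^ p * ∑ i ∈ range N, u ^ i = ∑ i ∈ Ico p (p + N), u ^ i := by
    intro p N
    rw [sum_Ico_eq_sum_range, mul_sum]
    simp only [add_tsub_cancel_left, pow_add]
  rw [shift, shift, ← sum_Ico_consecutive _ hmn (by omega : n ≤ m + (n + 1)),
    show m + (n + 1) = n + (m + 1) by omega]
  ring

section Recurrence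

variable {R : Type*} [CommRing R] {a b u c D : R} {G : ℕ → R} {W : ℕ}

theorem mul_eq_of_recurrence (hba : b = u * a) (h1 : a * G 1 = c + D)
    (h2 : ∀ k : ℕ, 1 ≤ k → k ≤ W - 1 → a * G (k + 1) = b * G k + D) :
    ∀ k : ℕ, 1 ≤ k → k ≤ W → a * G k = c * u ^ (k - 1) + D * ∑ i ∈ range k, u ^ i := by
  intro k hk hkW
  induction k, hk using Nat.le_induction with
  | base => simpa using h1
  | succ n hn ih =>
    have hpow : u * u ^ (n - 1) = u ^ n := by rw [← pow_succ', Nat.sub_add_cancel hn]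
    rw [Nat.add_sub_cancel, geom_sum_succ]
    linear_combination h2 n hn (by omega) + u * ih (by omega) + c * hpow + G n * hba

theorem mul_geom_sum_eq_of_recurrence (hW : 1 ≤ W) (hba : b = u * a) (h1 : a * G 1 = c + D)
    (h2 : ∀ k : ℕ, 1 ≤ k → k ≤ W - 1 → a * G (k + 1) = b * G k + D)
    (h3 : b * G W + D = 0) :
    D * ∑ i ∈ range (W + 1), u ^ i = -(c * u ^ W) := by
  have hpow : u * u ^ (W - 1) = u ^ W := by rw [← pow_succ', Nat.sub_add_cancel hW]
  rw [geom_sum_succ]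
  linear_combination h3 - u * mul_eq_of_recurrence hba h1 h2 W hW le_rfl - c * hpow - G W * hba

end Recurrence

theorem eq_div_geom_sum_of_recurrence {K : Type*} [Field K] {a b u c D : K} {G : ℕ → K} {W : ℕ}
    (ha : a ≠ 0) (hS : ∑ i ∈ range (W + 1), u ^ i ≠ 0) (hW : 1 ≤ W) (hba : b = u * a)
    (h1 : a * G 1 = c + D) (h2 : ∀ k : ℕ, 1 ≤ k → k ≤ W - 1 → a * G (k + 1) = b * G k + D)
    (h3 : b * G W + D = 0) (k : ℕ) (hk : 1 ≤ k) (hkW : k ≤ W) :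
    G k = c / a * (∑ i ∈ Ico (k - 1) W, u ^ i) / ∑ i ∈ range (W + 1), u ^ i := by
  have hG := mul_eq_of_recurrence hba h1 h2 k hk hkW
  have hDS := mul_geom_sum_eq_of_recurrence hW hba h1 h2 h3
  have hgeom := pow_mul_geom_sum_sub_pow_mul_geom_sum u (by omega : k - 1 ≤ W)
  rw [Nat.sub_add_cancel hk] at hgeom
  rw [div_mul_eq_mul_div, div_div, eq_div_iff (mul_ne_zero ha hS)]
  linear_combination (∑ i ∈ range (W + 1), u ^ i) * hG + (∑ i ∈ range k, u ^ i) * hDS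
    + c * hgeom

theorem fair_formal_solution_general
    (lam σ T r : ℝ) (W : ℕ) (hW : 1 ≤ W)
    (x : ℂ)
    (a b u S f Rbar Qbar : ℂ)
    (hu : u = b / a)
    (hS : S = ∑ i ∈ Finset.range (W + 1), u ^ i)
    (hf : f = ((W : ℂ) + 1) * u ^ W / S)
    (hRbar : Rbar = (r : ℂ) * Complex.exp (-((lam : ℂ) * T) * (1 - x)) / x
        + (1 - (r : ℂ)) * Complex.exp (-((lam : ℂ) * σ) * (1 - x)) - f)
    (hQbar : Qbar = 1 + (r : ℂ) * (1 / x - 1) * Complex.exp (-((lam : ℂ) * T) * (1 - x)) - f)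
    (ha0 : a ≠ 0) (hS0 : S ≠ 0)
    (q00 : ℂ) (G : ℕ → ℂ) (D : ℂ)
    (hD : D = -(G 0 / ((W : ℂ) + 1))
          * ((r : ℂ) * Complex.exp (-((lam : ℂ) * T) * (1 - x)) / x
              + (1 - (r : ℂ)) * Complex.exp (-((lam : ℂ) * σ) * (1 - x)))
        + (q00 / ((W : ℂ) + 1))
          * (1 + (r : ℂ) * (1 / x - 1) * Complex.exp (-((lam : ℂ) * T) * (1 - x))))
    (h1 : a * G 1 = G 0 - q00 + D)
    (h2 : ∀ k : ℕ, 1 ≤ k → k ≤ W - 1 → a * G (k + 1) = b * G k + D)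
    (h3 : b * G W + D = 0) :
    (∀ k : ℕ, 1 ≤ k → k ≤ W →
        G k = ((G 0 - q00) / a) * (∑ i ∈ Finset.Ico (k - 1) W, u ^ i) / S)
      ∧ Rbar * G 0 = q00 * Qbar := by
  have hba : b = u * a := by rw [hu, div_mul_cancel₀ _ ha0]
  subst hS
  refine ⟨eq_div_geom_sum_of_recurrence ha0 hS0 hW hba h1 h2 h3, ?_⟩
  have hDS := mul_geom_sum_eq_of_recurrence hW hba h1 h2 h3
  have hfc : f * (G 0 - q00) = -(((W : ℂ) + 1) * D) := by
    rw [hf, div_mul_eq_mul_div, div_eq_iff hS0]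
    linear_combination ((W : ℂ) + 1) * hDS
  have hWD : ((W : ℂ) + 1) * D
      = -G 0 * ((r : ℂ) * Complex.exp (-((lam : ℂ) * T) * (1 - x)) / x
          + (1 - (r : ℂ)) * Complex.exp (-((lam : ℂ) * σ) * (1 - x)))
        + q00 * (1 + (r : ℂ) * (1 / x - 1) * Complex.exp (-((lam : ℂ) * T) * (1 - x))) := by
    rw [hD]
    field_simp
  rw [hRbar, hQbar]
  linear_combination hWD - hfc

/-- Formal solution of the linear system for the fair load model:
the generating functions are expressed in terms of `G 0`, and `G 0` satisfies
`R̄·G₀ = q₀₀·Q̄`. -/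
theorem fair_formal_solution
    (lam σ T r : ℝ) (hlam : 0 < lam) (hσ : 0 < σ) (hT : 0 < T)
    (hr0 : 0 < r) (hr1 : r < 1) (W : ℕ) (hW : 1 ≤ W)
    (x : ℂ) (hx : x ≠ 0)
    (a b u S f Rbar Qbar : ℂ)
    (ha : a = (1 - (r : ℂ)) * Complex.exp (-((lam : ℂ) * σ) * (1 - x)))
    (hb : b = 1 - (r : ℂ) * Complex.exp (-((lam : ℂ) * T) * (1 - x)))
    (hu : u = b / a)
    (hS : S = ∑ i ∈ Finset.range (W + 1), u ^ i)
    (hf : f = ((W : ℂ) + 1) * u ^ W / S)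
    (hRbar : Rbar = (r : ℂ) * Complex.exp (-((lam : ℂ) * T) * (1 - x)) / x
        + (1 - (r : ℂ)) * Complex.exp (-((lam : ℂ) * σ) * (1 - x)) - f)
    (hQbar : Qbar = 1 + (r : ℂ) * (1 / x - 1) * Complex.exp (-((lam : ℂ) * T) * (1 - x)) - f)
    (ha0 : a ≠ 0) (hS0 : S ≠ 0)
    (q00 : ℂ) (G : ℕ → ℂ) (D : ℂ)
    (hD : D = -(G 0 / ((W : ℂ) + 1))
          * ((r : ℂ) * Complex.exp (-((lam : ℂ) * T) * (1 - x)) / x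
              + (1 - (r : ℂ)) * Complex.exp (-((lam : ℂ) * σ) * (1 - x)))
        + (q00 / ((W : ℂ) + 1))
          * (1 + (r : ℂ) * (1 / x - 1) * Complex.exp (-((lam : ℂ) * T) * (1 - x))))
    (h1 : a * G 1 = G 0 - q00 + D)
    (h2 : ∀ k : ℕ, 1 ≤ k → k ≤ W - 1 → a * G (k + 1) = b * G k + D)
    (h3 : b * G W + D = 0) :
    (∀ k : ℕ, 1 ≤ k → k ≤ W →
        G k = ((G 0 - q00) / a) * (∑ i ∈ Finset.Ico (k - 1) W, u ^ i) / S)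
      ∧ Rbar * G 0 = q00 * Qbar :=
  fair_formal_solution_general lam σ T r W hW x a b u S f Rbar Qbar hu hS hf hRbar hQbar ha0 hS0 q00
    G D hD h1 h2 h3
end

section
/- The functions R̄ and Q̄ vanish at x=1 and are differentiable at x=1, with derivatives R̄'(1) = λ·(rT+(1−r)σ)·(1 + W/(2(1−r))) − r and Q̄'(1) = λ·(rT+(1−r)σ)·W/(2(1−r)) − r. Consequently, −R̄'(1)/r = 1 − λ·(rT+(1−r)σ)·(1 + W/(2(1−r)))/r, and −R̄'(1)/r > 0 if and only if λ < r(1−r)/( (1−r+W/2)·(rT+(1−r)σ) ). -/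
/-!
Everything hinges on `u(1) = 1`. Writing `f = g ∘ u` with
`g(y) = (W+1) y^W / (1 + y + ⋯ + y^W)`, the quotient rule at `y = 1` gives `g(1) = 1` and
`g'(1) = W - W/2 = W/2`, while `u'(1) = -λ(rT + (1-r)σ)/(1-r)`. The remaining terms of `R̄`
and `Q̄` are elementary, and the sign criterion is a rearrangement of `R̄'(1) < 0`.
-/

open Finset Real

lemma hasDerivAt_exp_neg_mul_one_sub_one (c : ℝ) :
    HasDerivAt (fun x => exp (-c * (1 - x))) c 1 := by
  simpa using (((hasDerivAt_id' (1 : ℝ)).const_sub 1).const_mul (-c)).exp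

lemma sum_range_succ_natCast (n : ℕ) : ∑ i ∈ range (n + 1), (i : ℝ) = n * (n + 1) / 2 := by
  induction n with
  | zero => simp
  | succ n ih => rw [sum_range_succ, ih]; push_cast; ring

lemma hasDerivAt_geom_sum_one (n : ℕ) :
    HasDerivAt (fun y : ℝ => ∑ i ∈ range (n + 1), y ^ i) (n * (n + 1) / 2) 1 := by
  refine (HasDerivAt.fun_sum fun i (_ : i ∈ range (n + 1)) =>
    hasDerivAt_pow i (1 : ℝ)).congr_deriv ?_
  simp only [one_pow, mul_one, sum_range_succ_natCast]

lemma hasDerivAt_pow_div_geom_sum_one (W : ℕ) :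
    HasDerivAt (fun y : ℝ => (W + 1) * y ^ W / ∑ i ∈ range (W + 1), y ^ i) (W / 2) 1 := by
  have hS : ∑ i ∈ range (W + 1), (1 : ℝ) ^ i ≠ 0 := by simp; positivity
  refine (((hasDerivAt_pow W (1 : ℝ)).const_mul ((W : ℝ) + 1)).div
    (hasDerivAt_geom_sum_one W) hS).congr_deriv ?_
  simp only [one_pow, mul_one, sum_const, card_range, nsmul_eq_mul, Nat.cast_add, Nat.cast_one]
  field_simp
  ring

lemma hasDerivAt_div_exp_one {r : ℝ} (hr : r ≠ 1) (a b : ℝ) :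
    HasDerivAt (fun x => (1 - r * exp (-a * (1 - x))) / ((1 - r) * exp (-b * (1 - x))))
      (-(r * a + (1 - r) * b) / (1 - r)) 1 := by
  have h1r : 1 - r ≠ 0 := sub_ne_zero.2 hr.symm
  refine ((((hasDerivAt_exp_neg_mul_one_sub_one a).const_mul r).const_sub 1).div
    ((hasDerivAt_exp_neg_mul_one_sub_one b).const_mul (1 - r)) (by simpa using h1r)).congr_deriv ?_
  simp only [sub_self, mul_zero, exp_zero, mul_one]
  field_simp
  ring

lemma neg_sub_div_pos_iff_lt_div {lam P w r : ℝ} (hP : 0 < P) (hw : 0 ≤ w) (hr0 : 0 < r)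
    (hr1 : r < 1) :
    0 < -(lam * P * (1 + w / (2 * (1 - r))) - r) / r ↔
      lam < r * (1 - r) / ((1 - r + w / 2) * P) := by
  have h1r : 0 < 1 - r := sub_pos.2 hr1
  have hX : lam * P * (1 + w / (2 * (1 - r))) = lam * ((1 - r + w / 2) * P) / (1 - r) := by
    field_simp
  rw [div_pos_iff_of_pos_right hr0, neg_pos, sub_neg, hX, div_lt_iff₀ h1r,
    lt_div_iff₀ (by positivity)]

theorem fair_R_Q_derivatives_at_one_general
    (lam σ T r : ℝ) (hσ : 0 < σ) (hT : 0 < T)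
    (hr0 : 0 < r) (hr1 : r < 1) (W : ℕ)
    (u S f Rbar Qbar : ℝ → ℝ)
    (hu : ∀ x : ℝ, u x
      = (1 - r * Real.exp (-(lam * T) * (1 - x))) / ((1 - r) * Real.exp (-(lam * σ) * (1 - x))))
    (hS : ∀ x : ℝ, S x = ∑ i ∈ Finset.range (W + 1), u x ^ i)
    (hf : ∀ x : ℝ, f x = ((W : ℝ) + 1) * u x ^ W / S x)
    (hRbar : ∀ x : ℝ, Rbar x = r * Real.exp (-(lam * T) * (1 - x)) / x
        + (1 - r) * Real.exp (-(lam * σ) * (1 - x)) - f x)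
    (hQbar : ∀ x : ℝ, Qbar x
        = 1 + r * (1 / x - 1) * Real.exp (-(lam * T) * (1 - x)) - f x) :
    Rbar 1 = 0 ∧ Qbar 1 = 0
      ∧ HasDerivAt Rbar
          (lam * (r * T + (1 - r) * σ) * (1 + W / (2 * (1 - r))) - r) 1
      ∧ HasDerivAt Qbar
          (lam * (r * T + (1 - r) * σ) * (W / (2 * (1 - r))) - r) 1
      ∧ -(lam * (r * T + (1 - r) * σ) * (1 + W / (2 * (1 - r))) - r) / r
          = 1 - lam * (r * T + (1 - r) * σ) * (1 + W / (2 * (1 - r))) / r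
      ∧ (0 < -(lam * (r * T + (1 - r) * σ) * (1 + W / (2 * (1 - r))) - r) / r
          ↔ lam < r * (1 - r) / ((1 - r + W / 2) * (r * T + (1 - r) * σ))) := by
  have hu1 : u 1 = 1 := by simp [hu, (sub_pos.2 hr1).ne']
  have hu' : HasDerivAt u (-(r * (lam * T) + (1 - r) * (lam * σ)) / (1 - r)) 1 :=
    funext hu ▸ hasDerivAt_div_exp_one hr1.ne _ _
  have hf_eq : f = fun x => (W + 1) * u x ^ W / ∑ i ∈ range (W + 1), u x ^ i :=
    funext fun x => by rw [hf, hS]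
  have hf1 : f 1 = 1 := by simp [hf_eq, hu1, Nat.cast_add_one_ne_zero]
  have hf' : HasDerivAt f (W / 2 * (-(r * (lam * T) + (1 - r) * (lam * σ)) / (1 - r))) 1 := by
    rw [hf_eq]
    exact (hasDerivAt_pow_div_geom_sum_one W).comp_of_eq 1 hu' hu1.symm
  refine ⟨by simp [hRbar, hf1], by simp [hQbar, hf1], ?_, ?_, by field_simp; ring,
    neg_sub_div_pos_iff_lt_div (by positivity) (by positivity) hr0 hr1⟩
  · rw [funext hRbar]
    refine ((((hasDerivAt_exp_neg_mul_one_sub_one (lam * T)).const_mul r).div (hasDerivAt_id' 1)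
      one_ne_zero |>.add ((hasDerivAt_exp_neg_mul_one_sub_one (lam * σ)).const_mul (1 - r))).sub
      hf').congr_deriv ?_
    simp only [sub_self, mul_zero, exp_zero, mul_one, one_pow]
    field_simp
    ring
  · rw [funext hQbar]
    simp only [one_div]
    refine (((((hasDerivAt_inv one_ne_zero).sub_const 1).const_mul r).mul
      (hasDerivAt_exp_neg_mul_one_sub_one (lam * T)) |>.const_add 1).sub hf').congr_deriv ?_
    simp only [sub_self, mul_zero, exp_zero, mul_one, one_pow, inv_one]
    field_simp
    ring

/-- `R̄` and `Q̄` vanish at `x = 1` and are differentiable there,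
with `R̄'(1) = λ(rT+(1-r)σ)(1 + W/(2(1-r))) - r` and
`Q̄'(1) = λ(rT+(1-r)σ)·W/(2(1-r)) - r`; consequently
`-R̄'(1)/r = 1 - λ(rT+(1-r)σ)(1+W/(2(1-r)))/r`, which is positive iff
`λ < r(1-r)/((1-r+W/2)(rT+(1-r)σ))`. -/
theorem fair_R_Q_derivatives_at_one
    (lam σ T r : ℝ) (hlam : 0 < lam) (hσ : 0 < σ) (hT : 0 < T)
    (hr0 : 0 < r) (hr1 : r < 1) (W : ℕ) (hW : 1 ≤ W)
    (u S f Rbar Qbar : ℝ → ℝ)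
    (hu : ∀ x : ℝ, u x
      = (1 - r * Real.exp (-(lam * T) * (1 - x))) / ((1 - r) * Real.exp (-(lam * σ) * (1 - x))))
    (hS : ∀ x : ℝ, S x = ∑ i ∈ Finset.range (W + 1), u x ^ i)
    (hf : ∀ x : ℝ, f x = ((W : ℝ) + 1) * u x ^ W / S x)
    (hRbar : ∀ x : ℝ, Rbar x = r * Real.exp (-(lam * T) * (1 - x)) / x
        + (1 - r) * Real.exp (-(lam * σ) * (1 - x)) - f x)
    (hQbar : ∀ x : ℝ, Qbar x
        = 1 + r * (1 / x - 1) * Real.exp (-(lam * T) * (1 - x)) - f x) :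
    Rbar 1 = 0 ∧ Qbar 1 = 0
      ∧ HasDerivAt Rbar
          (lam * (r * T + (1 - r) * σ) * (1 + W / (2 * (1 - r))) - r) 1
      ∧ HasDerivAt Qbar
          (lam * (r * T + (1 - r) * σ) * (W / (2 * (1 - r))) - r) 1
      ∧ -(lam * (r * T + (1 - r) * σ) * (1 + W / (2 * (1 - r))) - r) / r
          = 1 - lam * (r * T + (1 - r) * σ) * (1 + W / (2 * (1 - r))) / r
      ∧ (0 < -(lam * (r * T + (1 - r) * σ) * (1 + W / (2 * (1 - r))) - r) / r
          ↔ lam < r * (1 - r) / ((1 - r + W / 2) * (r * T + (1 - r) * σ))) :=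
  fair_R_Q_derivatives_at_one_general lam σ T r hσ hT hr0 hr1 W u S f Rbar Qbar hu hS hf hRbar hQbar
end
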